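/- arXiv:1305.1091 — 4 statements merged into one kernel-verified Lean document; each statement's English description precedes it below -/
import Mathlib

section
/- Let D ⊆ F_q^n be a subspace and let V = {v_1,...,v_n} be a basis of F_q^n. Suppose U ⊆ F_q^n is a subspace of dimension δ such that for every nonzero u ∈ U there exist j ∈ {1,...,n} and c ∈ D with (u ∗ v_j) · c ≠ 0, where ∗ is the component-wise product. Then the support of D (the set of coordinate positions where some element of D is nonzero) has size at least δ. -/
variable {F : Type*} [Field F] [Fintype F] {n : ℕ}

/-- The span of the first `i` basis vectors `w_1, ..., w_i` (1-based). -/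
def spanPrefix (w : Module.Basis (Fin n) F (Fin n → F)) (i : ℕ) : Submodule F (Fin n → F) :=
  Submodule.span F (⇑w '' {k : Fin n | (k : ℕ) < i})

/-- The standard dot product on `F^n`. -/
def dotP (u v : Fin n → F) : F := ∑ i, u i * v i

/-- `ρ` is the function `ρ̄_W`: `ρ 0 = 0` and for nonzero `c`, `ρ c = l`
(1-based, written as `k+1` for `k : Fin n`) iff
`c ∈ Span{w_1,...,w_l} \ Span{w_1,...,w_{l-1}}`. -/
def IsRho (w : Module.Basis (Fin n) F (Fin n → F)) (ρ : (Fin n → F) → ℕ) : Prop :=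
  ρ 0 = 0 ∧ ∀ c : Fin n → F, c ≠ 0 → ∃ k : Fin n,
    ρ c = (k : ℕ) + 1 ∧ c ∈ spanPrefix w ((k : ℕ) + 1) ∧ c ∉ spanPrefix w (k : ℕ)

/-- `m` is the function `m(c) = min{l : c · w_l ≠ 0}` (1-based). -/
def IsM (w : Module.Basis (Fin n) F (Fin n → F)) (m : (Fin n → F) → ℕ) : Prop :=
  ∀ c : Fin n → F, c ≠ 0 → ∃ k : Fin n,
    m c = (k : ℕ) + 1 ∧ dotP c (w k) ≠ 0 ∧ ∀ k' : Fin n, k' < k → dotP c (w k') = 0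

/-- Hamming weight. -/
noncomputable def wH (c : Fin n → F) : ℕ := Set.ncard {i : Fin n | c i ≠ 0}

/-- Support of a subspace. -/
def suppD (D : Submodule F (Fin n → F)) : Set (Fin n) := {i : Fin n | ∃ c ∈ D, c i ≠ 0}

/-! A nonzero `u ∈ U` vanishing on `Supp(D)` would make every `(u ∗ v_j) · c` with `c ∈ D`
vanish, so restricting to the coordinates in `Supp(D)` is injective on `U`. -/

open Module

theorem Submodule.finrank_le_ncard_of_eqOn_zero {K ι : Type*} [Field K] [Finite ι]
    (U : Submodule K (ι → K)) (S : Set ι)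
    (hS : ∀ u ∈ U, (∀ i ∈ S, u i = 0) → u = 0) : finrank K U ≤ S.ncard := by
  have : Fintype S := Fintype.ofFinite S
  let restrict : U →ₗ[K] S → K := (LinearMap.funLeft K K Subtype.val).comp U.subtype
  have hinj : Function.Injective restrict := by
    rw [← LinearMap.ker_eq_bot, Submodule.eq_bot_iff]
    intro u hu
    exact Subtype.ext <| hS u u.2 fun i hi => congrFun hu ⟨i, hi⟩
  simpa [Nat.card_coe_set_eq] using LinearMap.finrank_le_finrank_of_injective hinj

theorem dotP_mul_eq_zero_of_eqOn_suppD {K : Type*} [Field K] {D : Submodule K (Fin n → K)}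
    {u c : Fin n → K} (w : Fin n → K) (hu : ∀ i ∈ suppD D, u i = 0) (hc : c ∈ D) :
    dotP (u * w) c = 0 := by
  refine Finset.sum_eq_zero fun i _ => ?_
  by_cases hci : c i = 0
  · simp [hci]
  · simp [hu i ⟨c, hc, hci⟩]

/-- if `U` has dimension `δ` and every nonzero `u ∈ U` satisfies
`(u ∗ v_j) · c ≠ 0` for some `j` and some `c ∈ D`, then `#Supp(D) ≥ δ`. -/
theorem stmt_5 (v : Module.Basis (Fin n) F (Fin n → F))
    (D U : Submodule F (Fin n → F)) (δ : ℕ) (hU : Module.finrank F U = δ)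
    (h : ∀ u : Fin n → F, u ∈ U → u ≠ 0 →
      ∃ j : Fin n, ∃ c ∈ D, dotP (u * v j) c ≠ 0) :
    δ ≤ (suppD D).ncard := by
  subst hU
  refine U.finrank_le_ncard_of_eqOn_zero _ fun u hu hvanish => ?_
  by_contra hne
  obtain ⟨j, c, hc, hdot⟩ := h u hu hne
  exact hdot (dotP_mul_eq_zero_of_eqOn_suppD (v j) hvanish hc)
end

section
/- Enhanced advisory bound: Let c ∈ F_q^n be nonzero. Then w_H(c) ≥ max{#I' : I' ⊆ {1,...,n} and I' has the μ-property with respect to m(c)}. -/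
/-!
Let `S` be the support of `c`. The vectors `c ∗ u_i` (`i ∈ I'`) lie in the image of `x ↦ c ∗ x`,
which has dimension `#S = w_H(c)`, so it suffices that they are linearly independent. For `i ∈ I'`
take `j` with `(i, j)` OWB and the functional `x ↦ v_j · x`, which sends `c ∗ u_{i'}` to
`c · (u_{i'} ∗ v_j)`. For `i' < i` this vanishes: `ρ̄_W(u_{i'} ∗ v_j) < m(c)` puts `u_{i'} ∗ v_j` in
`Span{w_1, …, w_{m(c)-1}} ⊆ c^⊥`. For `i' = i` it does not, since `ρ̄_W(u_i ∗ v_j) = m(c)` means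
`u_i ∗ v_j` has a nonzero `w_{m(c)}`-coordinate modulo that span, and `c · w_{m(c)} ≠ 0`.
A family with such a triangular system of functionals is linearly independent.
-/

variable {F : Type*} [Field F] [Fintype F] {n : ℕ}

/-- `I'` has the μ-property with respect to `l`: for all `i ∈ I'` there is `j`
with `(i,j)` OWB with respect to `I'` and `ρ̄_W(u_i ∗ v_j) = l`. -/
def MuProperty (u v : Module.Basis (Fin n) F (Fin n → F)) (ρ : (Fin n → F) → ℕ)
    (I' : Finset (Fin n)) (l : ℕ) : Prop :=
  ∀ i ∈ I', ∃ j : Fin n,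
    (∀ i' ∈ I', i' < i → ρ (u i' * v j) < ρ (u i * v j)) ∧
    ρ (u i * v j) = l

-- In a nontrivial relation, apply the functional belonging to its largest index.
theorem linearIndependent_of_triangular_functionals {ι R M : Type*} [LinearOrder ι] [Fintype ι]
    [Ring R] [NoZeroDivisors R] [AddCommGroup M] [Module R M] (x : ι → M)
    (h : ∀ i, ∃ φ : M →ₗ[R] R, φ (x i) ≠ 0 ∧ ∀ i' < i, φ (x i') = 0) :
    LinearIndependent R x := by
  classical
  rw [Fintype.linearIndependent_iff]
  intro g hg
  by_contra! hne
  set T := Finset.univ.filter fun i => g i ≠ 0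
  have hT : T.Nonempty := hne.imp fun i hi => by simpa [T] using hi
  set i₀ := T.max' hT
  have hgi₀ : g i₀ ≠ 0 := by simpa [T] using T.max'_mem hT
  obtain ⟨φ, hφi₀, hφlt⟩ := h i₀
  have hsum : ∑ i, g i * φ (x i) = g i₀ * φ (x i₀) := by
    refine Finset.sum_eq_single i₀ (fun i _ hi => ?_) (by simp)
    by_cases hgi : g i = 0
    · rw [hgi, zero_mul]
    · have hle : i ≤ i₀ := T.le_max' i (by simpa [T] using hgi)
      rw [hφlt i (lt_of_le_of_ne hle hi), mul_zero]
  have hφg : ∑ i, g i * φ (x i) = 0 := by simpa using congrArg φ hg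
  exact mul_ne_zero hgi₀ hφi₀ (hsum ▸ hφg)

section

variable {K : Type*} [Field K]

theorem card_le_wH_of_linearIndependent_mul {ι : Type*} [Fintype ι] (c : Fin n → K)
    {x : ι → Fin n → K} (hx : LinearIndependent K fun i => c * x i) :
    Fintype.card ι ≤ wH c := by
  classical
  have hspan : Submodule.span K (Set.range fun i => c * x i) ≤
      LinearMap.range (Matrix.toLin' (Matrix.diagonal c)) := by
    rw [Submodule.span_le]
    rintro _ ⟨i, rfl⟩
    exact ⟨x i, funext fun s => by simp [Matrix.mulVec_diagonal]⟩
  have hwH : wH c = Fintype.card {s // c s ≠ 0} := by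
    rw [wH, Set.ncard_eq_toFinset_card', Set.toFinset_card]
    rfl
  calc Fintype.card ι = Module.finrank K (Submodule.span K (Set.range fun i => c * x i)) :=
        (finrank_span_eq_card hx).symm
    _ ≤ (Matrix.diagonal c).rank := Submodule.finrank_mono hspan
    _ = wH c := by rw [Matrix.rank_diagonal, hwH]

theorem dotP_mul_right (c x y : Fin n → K) : dotP c (x * y) = y ⬝ᵥ (c * x) := by
  simp only [dotP, dotProduct, Pi.mul_apply]
  exact Finset.sum_congr rfl fun _ _ => by ring

theorem spanPrefix_mono (w : Module.Basis (Fin n) K (Fin n → K)) : Monotone (spanPrefix w) :=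
  fun _ _ hij => Submodule.span_mono (Set.image_mono fun _ ht => lt_of_lt_of_le ht hij)

theorem spanPrefix_succ (w : Module.Basis (Fin n) K (Fin n → K)) (k : Fin n) :
    spanPrefix w (k + 1) = K ∙ w k ⊔ spanPrefix w k := by
  have hset : {t : Fin n | (t : ℕ) < k + 1} = insert k {t : Fin n | (t : ℕ) < k} := by
    ext t
    simp only [Set.mem_insert_iff, Fin.ext_iff]
    exact Nat.lt_succ_iff_lt_or_eq.trans or_comm
  rw [spanPrefix, hset, Set.image_insert_eq, Submodule.span_insert, spanPrefix]

variable {w : Module.Basis (Fin n) K (Fin n → K)} {ρ m : (Fin n → K) → ℕ} {c x : Fin n → K}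

theorem IsRho.mem_spanPrefix_of_le (hρ : IsRho w ρ) {i : ℕ} (hx : ρ x ≤ i) :
    x ∈ spanPrefix w i := by
  rcases eq_or_ne x 0 with rfl | hx0
  · exact Submodule.zero_mem _
  obtain ⟨k, hk, hmem, -⟩ := hρ.2 x hx0
  exact spanPrefix_mono w (hk ▸ hx) hmem

theorem IsRho.notMem_spanPrefix_of_lt (hρ : IsRho w ρ) {i : ℕ} (hx : i < ρ x) :
    x ∉ spanPrefix w i := by
  have hx0 : x ≠ 0 := by
    rintro rfl
    rw [hρ.1] at hx
    exact Nat.not_lt_zero _ hx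
  obtain ⟨k, hk, -, hnot⟩ := hρ.2 x hx0
  exact fun hmem => hnot (spanPrefix_mono w (by omega) hmem)

theorem dotP_eq_zero_of_mem_spanPrefix {k : ℕ}
    (hz : ∀ k' : Fin n, (k' : ℕ) < k → dotP c (w k') = 0) (hx : x ∈ spanPrefix w k) :
    dotP c x = 0 := by
  have hker : spanPrefix w k ≤ LinearMap.ker (dotProductBilin K K c) := by
    rw [spanPrefix, Submodule.span_le]
    rintro _ ⟨k', hk', rfl⟩
    exact hz k' hk'
  exact hker hx

theorem dotP_eq_zero_of_rho_lt (hρ : IsRho w ρ) (hm : IsM w m) (hc : c ≠ 0)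
    (hx : ρ x < m c) : dotP c x = 0 := by
  obtain ⟨k, hk, -, hz⟩ := hm c hc
  exact dotP_eq_zero_of_mem_spanPrefix hz (hρ.mem_spanPrefix_of_le (by omega))

theorem dotP_ne_zero_of_rho_eq (hρ : IsRho w ρ) (hm : IsM w m) (hc : c ≠ 0)
    (hx : ρ x = m c) : dotP c x ≠ 0 := by
  obtain ⟨k, hk, hdk, hz⟩ := hm c hc
  have hmem : x ∈ K ∙ w k ⊔ spanPrefix w k :=
    spanPrefix_succ w k ▸ hρ.mem_spanPrefix_of_le (by omega)
  obtain ⟨_, hax, y, hy, rfl⟩ := Submodule.mem_sup.mp hmem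
  obtain ⟨a, rfl⟩ := Submodule.mem_span_singleton.mp hax
  intro hdot
  have hsplit : dotP c (a • w k + y) = a * dotP c (w k) + dotP c y := by
    change c ⬝ᵥ _ = a * (c ⬝ᵥ w k) + c ⬝ᵥ y
    rw [dotProduct_add, dotProduct_smul, smul_eq_mul]
  rw [hsplit, dotP_eq_zero_of_mem_spanPrefix hz hy, add_zero] at hdot
  obtain rfl : a = 0 := (mul_eq_zero.mp hdot).resolve_right hdk
  rw [zero_smul, zero_add] at hx
  exact hρ.notMem_spanPrefix_of_lt (i := k) (by omega) hy

end

/-- enhanced advisory bound: for nonzero `c`, every `I'` with the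
μ-property with respect to `m(c)` satisfies `#I' ≤ w_H(c)`; i.e. `w_H(c)` is at
least the maximum such `#I'`. -/
theorem stmt_9 (u v w : Module.Basis (Fin n) F (Fin n → F))
    (ρ m : (Fin n → F) → ℕ) (hρ : IsRho w ρ) (hm : IsM w m)
    (c : Fin n → F) (hc : c ≠ 0)
    (I' : Finset (Fin n)) (hI : MuProperty u v ρ I' (m c)) :
    I'.card ≤ wH c := by
  have hli : LinearIndependent F fun i : I' => c * u i := by
    refine linearIndependent_of_triangular_functionals _ fun i => ?_
    obtain ⟨j, hOWB, hρj⟩ := hI i i.2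
    refine ⟨dotProductBilin F F (v j), ?_, fun i' hi' => ?_⟩
    · simpa [← dotP_mul_right] using dotP_ne_zero_of_rho_eq hρ hm hc hρj
    · simpa [← dotP_mul_right] using dotP_eq_zero_of_rho_lt hρ hm hc (hρj ▸ hOWB i' i'.2 hi')
  simpa using card_le_wH_of_linearIndependent_mul c hli
end

section
/- Let {d_1,...,d_{n-k}} ⊆ F_q^n be linearly independent with ρ̄_W(d_1) < ... < ρ̄_W(d_{n-k}), with values l_1 < ... < l_{n-k}, and let C = {c ∈ F_q^n : c · d_1 = ... = c · d_{n-k} = 0}. Then m(C) = {1,...,n} \ {l_1,...,l_{n-k}}. -/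
/-!
Write `x_j = c · w_j` and let `e_a` be the coordinate vector of `d_a` in the basis `W`. Then
`c · d_a = x · e_a`, the map `c ↦ x` is a linear bijection, `m(c)` is one plus the first index
where `x` is nonzero, and `ρ̄_W(d_a)` is one plus the last index `k_a` where `e_a` is nonzero. The
claim becomes a statement about an echelon system: the first nonzero positions of the solutions
of `x · e_a = 0` are exactly the positions other than the pivots `k_a`. A solution cannot start
at a pivot `k_a`, since then `x · e_a = x_{k_a} (e_a)_{k_a} ≠ 0`; conversely, a solution starting
at any other position is built by back-substitution along the increasing pivots.
-/

variable {F : Type*} [Field F] [Fintype F] {n : ℕ}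

open Matrix

def IsFirstNonzero {K ι : Type*} [Zero K] [LT ι] (x : ι → K) (l : ι) : Prop :=
  x l ≠ 0 ∧ ∀ j < l, x j = 0

def IsLastNonzero {K ι : Type*} [Zero K] [LT ι] (v : ι → K) (k : ι) : Prop :=
  v k ≠ 0 ∧ ∀ j, k < j → v j = 0

theorem IsFirstNonzero.unique {K ι : Type*} [Zero K] [LinearOrder ι] {x : ι → K} {l l' : ι}
    (h : IsFirstNonzero x l) (h' : IsFirstNonzero x l') : l = l' := by
  by_contra hne
  rcases lt_or_gt_of_ne hne with hlt | hlt
  · exact h.1 (h'.2 l hlt)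
  · exact h'.1 (h.2 l' hlt)

section Echelon

variable {K ι : Type*} [Field K] [LinearOrder ι] [Fintype ι]

theorem dotProduct_eq_mul_of_forall_lt_of_forall_gt {x v : ι → K} {l : ι}
    (hx : ∀ j < l, x j = 0) (hv : ∀ j, l < j → v j = 0) : x ⬝ᵥ v = x l * v l := by
  refine Finset.sum_eq_single l (fun j _ hj => ?_) (by simp)
  rcases lt_or_gt_of_ne hj with hlt | hlt
  · rw [hx j hlt, zero_mul]
  · rw [hv j hlt, mul_zero]

theorem IsFirstNonzero.dotProduct_ne_zero {x v : ι → K} {l : ι} (hx : IsFirstNonzero x l)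
    (hv : IsLastNonzero v l) : x ⬝ᵥ v ≠ 0 := by
  rw [dotProduct_eq_mul_of_forall_lt_of_forall_gt hx.2 hv.2]
  exact mul_ne_zero hx.1 hv.1

theorem exists_isFirstNonzero_of_echelon {r : ℕ} (e : Fin r → ι → K) (k : Fin r → ι)
    (hk : StrictMono k) (he : ∀ a, IsLastNonzero (e a) (k a)) {l : ι} (hl : l ∉ Set.range k) :
    ∃ x : ι → K, (∀ a, x ⬝ᵥ e a = 0) ∧ IsFirstNonzero x l := by
  induction r with
  | zero =>
    refine ⟨Pi.single l 1, finZeroElim, by simp, fun j hj => ?_⟩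
    simp [hj.ne]
  | succ r ih =>
    obtain ⟨x, hx, hxl⟩ := ih (e ∘ Fin.castSucc) (k ∘ Fin.castSucc)
      (hk.comp Fin.strictMono_castSucc) (fun a => he _) (fun ⟨a, ha⟩ => hl ⟨_, ha⟩)
    set p := k (Fin.last r)
    have hp : ∀ a : Fin r, e a.castSucc p = 0 :=
      fun a => (he _).2 p (hk (Fin.castSucc_lt_last a))
    rcases lt_or_gt_of_ne (fun h => hl ⟨Fin.last r, h⟩ : p ≠ l) with hpl | hlp
    · refine ⟨x, Fin.forall_fin_succ'.2 ⟨hx, ?_⟩, hxl⟩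
      rw [dotProduct_eq_mul_of_forall_lt_of_forall_gt hxl.2 fun j hj => (he _).2 j (hpl.trans hj),
        (he _).2 l hpl, mul_zero]
    · -- correct the last equation at its pivot `p`, which the earlier equations do not see
      set t := -(x ⬝ᵥ e (Fin.last r)) / e (Fin.last r) p
      have hsingle : ∀ j ≤ l, (x + Pi.single p t : ι → K) j = x j := fun j hj => by
        simp [(hj.trans_lt hlp).ne]
      refine ⟨x + Pi.single p t, Fin.forall_fin_succ'.2 ⟨fun a => ?_, ?_⟩, ?_, fun j hj => ?_⟩
      · rw [add_dotProduct, single_dotProduct, hp, mul_zero, add_zero]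
        exact hx a
      · rw [add_dotProduct, single_dotProduct, div_mul_cancel₀ _ (he _).1, add_neg_cancel]
      · rw [hsingle l le_rfl]
        exact hxl.1
      · rw [hsingle j hj.le]
        exact hxl.2 j hj

theorem setOf_isFirstNonzero_of_echelon {r : ℕ} (e : Fin r → ι → K) (k : Fin r → ι)
    (hk : StrictMono k) (he : ∀ a, IsLastNonzero (e a) (k a)) :
    {l | ∃ x : ι → K, (∀ a, x ⬝ᵥ e a = 0) ∧ IsFirstNonzero x l} = (Set.range k)ᶜ := by
  ext l
  refine ⟨?_, exists_isFirstNonzero_of_echelon e k hk he⟩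
  rintro ⟨x, hx, hxl⟩ ⟨a, rfl⟩
  exact hxl.dotProduct_ne_zero (he a) (hx a)

end Echelon

section Basis

variable {K : Type*} [Field K] (w : Module.Basis (Fin n) K (Fin n → K))

theorem mem_spanPrefix_iff {i : ℕ} {c : Fin n → K} :
    c ∈ spanPrefix w i ↔ ∀ j : Fin n, i ≤ (j : ℕ) → w.repr c j = 0 := by
  rw [spanPrefix, Module.Basis.mem_span_image]
  refine ⟨fun h j hj => ?_, fun h j hj => ?_⟩
  · by_contra hne
    have : (j : ℕ) < i := h (Finsupp.mem_support_iff.mpr hne)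
    omega
  · by_contra hji
    exact Finsupp.mem_support_iff.mp hj (h j (not_lt.mp hji))

theorem isLastNonzero_repr_of_mem_spanPrefix {c : Fin n → K} {k : Fin n}
    (hc : c ∈ spanPrefix w (k + 1)) (hc' : c ∉ spanPrefix w k) : IsLastNonzero (w.repr c) k := by
  rw [mem_spanPrefix_iff] at hc hc'
  have hzero : ∀ j, k < j → w.repr c j = 0 := fun j hj => hc j (Fin.lt_def.mp hj)
  refine ⟨fun hk => hc' fun j hj => ?_, hzero⟩
  rcases (Fin.le_def.mpr hj).eq_or_lt with rfl | hlt
  exacts [hk, hzero j hlt]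

noncomputable def dotCoords (c : Fin n → K) : Fin n → K :=
  c ᵥ* (Pi.basisFun K (Fin n)).toMatrix w

theorem dotCoords_apply (c : Fin n → K) (j : Fin n) : dotCoords w c j = dotP c (w j) := by
  simp [dotCoords, vecMul, dotProduct, dotP, Module.Basis.toMatrix_apply]

theorem dotP_eq_dotCoords_dotProduct_repr (c v : Fin n → K) :
    dotP c v = dotCoords w c ⬝ᵥ w.repr v := by
  rw [dotCoords, ← dotProduct_mulVec, Module.Basis.toMatrix_mulVec_repr]
  rfl

theorem dotCoords_surjective : Function.Surjective (dotCoords w) :=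
  have := (Pi.basisFun K (Fin n)).invertibleToMatrix w
  vecMul_surjective_iff_isUnit.mpr (isUnit_of_invertible _)

theorem IsM.exists_isFirstNonzero {m : (Fin n → K) → ℕ} (hm : IsM w m) {c : Fin n → K}
    (hc : c ≠ 0) : ∃ k : Fin n, m c = k + 1 ∧ IsFirstNonzero (dotCoords w c) k := by
  simpa only [IsFirstNonzero, dotCoords_apply] using hm c hc

end Basis

/-- if `d_1,...,d_{n-k}` are linearly independent with
`ρ̄_W(d_1) < ⋯ < ρ̄_W(d_{n-k})` and `C = {c : c · d_a = 0 for all a}`, then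
`m(C) = {1,...,n} \ {ρ̄_W(d_1),...,ρ̄_W(d_{n-k})}`. -/
theorem stmt_11 (w : Module.Basis (Fin n) F (Fin n → F))
    (ρ m : (Fin n → F) → ℕ) (hρ : IsRho w ρ) (hm : IsM w m)
    (r : ℕ) (d : Fin r → (Fin n → F)) (hd : LinearIndependent F d)
    (hmono : StrictMono fun a : Fin r => ρ (d a)) :
    {l : ℕ | ∃ c : Fin n → F, (∀ a : Fin r, dotP c (d a) = 0) ∧ c ≠ 0 ∧ m c = l}
      = {l : ℕ | 1 ≤ l ∧ l ≤ n} \ {l : ℕ | ∃ a : Fin r, ρ (d a) = l} := by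
  choose k hρk hspan hspan' using fun a => hρ.2 (d a) (hd.ne_zero a)
  have hk : StrictMono k := fun a b hab => Fin.lt_def.mpr <| by
    have := hmono hab
    simp only [hρk] at this
    omega
  have hsol := Set.ext_iff.mp <| setOf_isFirstNonzero_of_echelon _ k hk
    fun a => isLastNonzero_repr_of_mem_spanPrefix w (hspan a) (hspan' a)
  simp only [dotP_eq_dotCoords_dotProduct_repr w]
  ext l
  constructor
  · rintro ⟨c, hc, hc0, rfl⟩
    obtain ⟨j, hmj, hj⟩ := hm.exists_isFirstNonzero w hc0
    have hjk : j ∉ Set.range k := (hsol j).mp ⟨_, hc, hj⟩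
    refine ⟨⟨by omega, by omega⟩, fun ⟨a, ha⟩ => hjk ⟨a, Fin.ext ?_⟩⟩
    have := hρk a
    omega
  · rintro ⟨⟨hl1, hln⟩, hl⟩
    have hlk : (⟨l - 1, by omega⟩ : Fin n) ∉ Set.range k := fun ⟨a, ha⟩ =>
      hl ⟨a, by rw [hρk, ha, Fin.val_mk]; omega⟩
    obtain ⟨x, hx, hxl⟩ := (hsol _).mpr hlk
    obtain ⟨c, rfl⟩ := dotCoords_surjective w x
    have hc0 : c ≠ 0 := by
      rintro rfl
      exact hxl.1 (by simp [dotCoords])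
    obtain ⟨j, hmj, hj⟩ := hm.exists_isFirstNonzero w hc0
    refine ⟨c, hx, hc0, ?_⟩
    rw [hmj, hj.unique hxl, Fin.val_mk]
    omega
end

section
/- The generalized Hamming weights are strictly increasing: for a linear code C ⊆ F_q^n of dimension k and 1 ≤ t < k, d_t(C) < d_{t+1}(C). -/
/-! Take a `(t+1)`-dimensional subcode `D ≤ C` of minimal support and a coordinate `i` in its
support. The codewords of `D` vanishing at `i` form a `t`-dimensional subcode whose support misses
`i`, so `d_t(C) ≤ #Supp(D) - 1 < d_{t+1}(C)`. -/

variable {F : Type*} [Field F] [Fintype F] {n : ℕ}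

theorem Submodule.exists_le_finrank_eq {K V : Type*} [DivisionRing K] [AddCommGroup V]
    [Module K V] (C : Submodule K V) {t : ℕ} (ht : t ≤ Module.finrank K C) :
    ∃ D ≤ C, Module.finrank K D = t := by
  obtain ⟨f, hf⟩ := exists_linearIndependent_of_le_finrank ht
  refine ⟨Submodule.span K (Set.range (C.subtype ∘ f)), ?_, ?_⟩
  · rw [Submodule.span_le]
    rintro _ ⟨j, rfl⟩
    exact (f j).2
  · rw [finrank_span_eq_card (hf.map' C.subtype C.ker_subtype), Fintype.card_fin]

section

omit [Fintype F]

theorem suppD_mono {D D' : Submodule F (Fin n → F)} (h : D' ≤ D) : suppD D' ⊆ suppD D :=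
  fun _ ⟨c, hc, hci⟩ => ⟨c, h hc, hci⟩

theorem suppD_nonempty {D : Submodule F (Fin n → F)} (hD : D ≠ ⊥) : (suppD D).Nonempty := by
  obtain ⟨c, hcD, hc0⟩ := Submodule.exists_mem_ne_zero_of_ne_bot hD
  obtain ⟨i, hci⟩ := Function.ne_iff.mp hc0
  exact ⟨i, c, hcD, hci⟩

theorem notMem_suppD_inf_ker_proj (D : Submodule F (Fin n → F)) (i : Fin n) :
    i ∉ suppD (D ⊓ LinearMap.ker (LinearMap.proj i)) :=
  fun ⟨_, hc, hci⟩ => hci hc.2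

theorem finrank_inf_ker_proj_add_one {D : Submodule F (Fin n → F)} {i : Fin n}
    (hi : i ∈ suppD D) :
    Module.finrank F ↥(D ⊓ LinearMap.ker (LinearMap.proj i)) + 1 = Module.finrank F D := by
  obtain ⟨c, hcD, hci⟩ := hi
  let φ : Module.Dual F D := (LinearMap.proj i).domRestrict D
  have hφ : φ ≠ 0 := fun h => hci (LinearMap.congr_fun h ⟨c, hcD⟩)
  rw [← Submodule.map_comap_subtype, ← LinearMap.ker_domRestrict,
    Submodule.finrank_map_subtype_eq]
  exact Module.Dual.finrank_ker_add_one_of_ne_zero hφ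

theorem exists_codimOne_ncard_suppD_lt {D : Submodule F (Fin n → F)} (hD : D ≠ ⊥) :
    ∃ D' ≤ D, Module.finrank F D' + 1 = Module.finrank F D ∧
      (suppD D').ncard < (suppD D).ncard := by
  obtain ⟨i, hi⟩ := suppD_nonempty hD
  refine ⟨D ⊓ LinearMap.ker (LinearMap.proj i), inf_le_left,
    finrank_inf_ker_proj_add_one hi, Set.ncard_lt_ncard ?_ (Set.toFinite _)⟩
  exact (suppD_mono inf_le_left).ssubset_of_not_subset
    fun h => notMem_suppD_inf_ker_proj D i (h hi)

end

theorem stmt_13_general (C : Submodule F (Fin n → F)) (k t : ℕ)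
    (hC : Module.finrank F C = k) (htk : t < k) :
    sInf {r : ℕ | ∃ D : Submodule F (Fin n → F),
        D ≤ C ∧ Module.finrank F D = t ∧ (suppD D).ncard = r}
      < sInf {r : ℕ | ∃ D : Submodule F (Fin n → F),
        D ≤ C ∧ Module.finrank F D = t + 1 ∧ (suppD D).ncard = r} := by
  obtain ⟨D₀, hD₀C, hD₀⟩ := C.exists_le_finrank_eq (t := t + 1) (by omega)
  refine Nat.lt_of_succ_le (le_csInf ⟨_, D₀, hD₀C, hD₀, rfl⟩ ?_)
  rintro _ ⟨D, hDC, hD, rfl⟩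
  have hD_ne_bot : D ≠ ⊥ := Submodule.one_le_finrank_iff.mp (by omega)
  obtain ⟨D', hD'D, hD', hlt⟩ := exists_codimOne_ncard_suppD_lt hD_ne_bot
  exact Nat.succ_le_of_lt (lt_of_le_of_lt (Nat.sInf_le ⟨D', hD'D.trans hDC, by omega, rfl⟩) hlt)

/-- the generalized Hamming weights are strictly increasing:
`d_t(C) < d_{t+1}(C)` for `1 ≤ t < k = dim C`. -/
theorem stmt_13 (C : Submodule F (Fin n → F)) (k t : ℕ)
    (hC : Module.finrank F C = k) (ht1 : 1 ≤ t) (htk : t < k) :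
    sInf {r : ℕ | ∃ D : Submodule F (Fin n → F),
        D ≤ C ∧ Module.finrank F D = t ∧ (suppD D).ncard = r}
      < sInf {r : ℕ | ∃ D : Submodule F (Fin n → F),
        D ≤ C ∧ Module.finrank F D = t + 1 ∧ (suppD D).ncard = r} :=
  stmt_13_general C k t hC htk
end
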